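/- arXiv:1505.06602 — 2 statements merged into one kernel-verified Lean document; each statement's English description precedes it below -/
import Mathlib

section
/- For λ, μ ∈ Λ≥_{ℤ×}(p) (weakly decreasing integer vectors with nonzero entries and exactly p positive entries), λ ⪰ μ if and only if λ♭ ⪰_a μ♭ in the gl(p|q)-ordering, where q = n − p. -/
/-- `δ_a` as an element of the free abelian group `P` on `{δ_r : r ∈ ℕ, r ≥ 1}`,
with the conventions `δ₀ = 0` and `δ_{−r} = −δ_r`. -/
def delta (a : ℤ) : ℕ → ℤ := fun r =>
  if r = 0 then 0 else (if (r : ℤ) = a then 1 else 0) - (if (r : ℤ) = -a then 1 else 0)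

/-- The positive cone of `P` for type `b_∞`: nonnegative integer combinations of
`−δ₁` and `δ_r − δ_{r+1}` (`r ≥ 1`). -/
def BCone (v : ℕ → ℤ) : Prop :=
  ∃ c : ℕ →₀ ℕ, v = c.sum fun r k =>
    k • (if r = 0 then -(delta 1) else delta (r : ℤ) - delta ((r : ℤ) + 1))

/-- `wt_s(λ) = Σ_{s ≤ i ≤ n} δ_{λᵢ}`. -/
def wts {n : ℕ} (lam : Fin n → ℤ) (s : Fin n) : ℕ → ℤ :=
  ∑ i ∈ Finset.univ.filter (fun i => s ≤ i), delta (lam i)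

/-- Brundan's ordering `λ ⪰ μ`: `wt(λ) = wt(μ)` and `wt_s(λ) ≥ wt_s(μ)` for all `s`. -/
def BSucceq {n : ℕ} (lam mu : Fin n → ℤ) : Prop :=
  (∑ i : Fin n, delta (lam i)) = (∑ i : Fin n, delta (mu i)) ∧
    ∀ s : Fin n, BCone (wts lam s - wts mu s)


/-- `γ_a` as an element of the free abelian group on `{γ_r : r ∈ ℤ}`. -/
def gam (a : ℤ) : ℤ → ℤ := fun r => if r = a then 1 else 0

/-- The positive cone for `gl_∞`: nonnegative integer combinations of `γ_r − γ_{r+1}`. -/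
def GCone (v : ℤ → ℤ) : Prop :=
  ∃ c : ℤ →₀ ℕ, v = c.sum fun r k => k • (gam r - gam (r + 1))

/-- We model `ℤ^{p|q}` (with `p + q = n`) as `Fin n → ℤ`, where index `i < p`
corresponds to the `J(p|q)`-index `i − p ∈ {−p,…,−1}` (sign `−1`) and index `i ≥ p`
corresponds to `i − p + 1 ∈ {1,…,q}` (sign `+1`).
`wt_s(f) = Σ_{s ≤ i} sgn(i) γ_{f(i)}`. -/
def wtsA {n : ℕ} (p : ℕ) (f : Fin n → ℤ) (s : Fin n) : ℤ → ℤ :=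
  ∑ i ∈ Finset.univ.filter (fun i => s ≤ i),
    (if (i : ℕ) < p then -(gam (f i)) else gam (f i))

/-- The Bruhat ordering `⪰_a` on `ℤ^{p|q}`. -/
def ASucceq {n : ℕ} (p : ℕ) (f g : Fin n → ℤ) : Prop :=
  (∑ i : Fin n, (if (i : ℕ) < p then -(gam (f i)) else gam (f i))) =
      (∑ i : Fin n, (if (i : ℕ) < p then -(gam (g i)) else gam (g i))) ∧
    ∀ s : Fin n, GCone (wtsA p f s - wtsA p g s)

/-- The map `♭ : λ ↦ (−λ₁,…,−λ_p | λ_{p+1},…,λ_n)`. -/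
def flat {n : ℕ} (p : ℕ) (lam : Fin n → ℤ) : Fin n → ℤ :=
  fun i => if (i : ℕ) < p then -lam i else lam i


/-! ### Auxiliary machinery -/

section Aux

/-- The "negative reflection" map sending `δ_r` (`r ≥ 1`) to `−γ_{−r}`. -/
def psi (v : ℕ → ℤ) : ℤ → ℤ := fun r => if r < 0 then -v (-r).toNat else 0

lemma psi_delta_pos (a : ℤ) (ha : 0 < a) : -(gam (-a)) = psi (delta a) := by
  funext r
  simp only [psi, gam, delta, Pi.neg_apply]
  split_ifs <;> omega

lemma psi_delta_neg (a : ℤ) (ha : a < 0) : gam a = psi (delta a) := by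
  funext r
  simp only [psi, gam, delta]
  split_ifs <;> omega

lemma psi_sub (v w : ℕ → ℤ) : psi (v - w) = psi v - psi w := by
  funext r
  by_cases h : r < 0 <;> simp [psi, h]
  ring

lemma psi_sum {ι : Type*} (s : Finset ι) (f : ι → ℕ → ℤ) :
    psi (∑ i ∈ s, f i) = ∑ i ∈ s, psi (f i) := by
  funext r
  by_cases h : r < 0 <;> simp [psi, h, Finset.sum_apply]

lemma psi_injOn (v w : ℕ → ℤ) (h : psi v = psi w) (h0 : v 0 = w 0) : v = w := by
  funext r
  cases r with
  | zero => exact h0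
  | succ r =>
    have hh := congrFun h (-((r:ℤ)+1))
    simp only [psi, if_pos (show -((r:ℤ)+1) < 0 by omega)] at hh
    rw [show ((- -((r:ℤ)+1)).toNat) = r + 1 from by omega] at hh
    exact neg_injective hh

lemma finsupp_sum_ind {α : Type*} [DecidableEq α] (c : α →₀ ℕ) (a : α) :
    (∑ r ∈ c.support, (c r : ℤ) * (if r = a then 1 else 0)) = c a := by
  rw [show (∑ r ∈ c.support, (c r : ℤ) * (if r = a then 1 else 0))
      = c.sum fun r k => (k : ℤ) * (if r = a then 1 else 0) from rfl]
  rw [Finsupp.sum_eq_single a (fun b _ hb => by simp [hb]) (by simp)]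
  simp

lemma bgen_apply (r m : ℕ) :
    (if r = 0 then -(delta 1) else delta (r:ℤ) - delta ((r:ℤ)+1)) (m+1)
      = (if r = m+1 then (1:ℤ) else 0) - (if r = m then 1 else 0) := by
  rcases r with _ | r
  · rw [if_pos rfl, Pi.neg_apply]
    simp only [delta]
    split_ifs <;> first | contradiction | omega
  · rw [if_neg (Nat.succ_ne_zero r), Pi.sub_apply]
    simp only [delta]
    split_ifs <;> first | contradiction | omega

lemma bgen_apply_zero (r : ℕ) :
    (if r = 0 then -(delta 1) else delta (r:ℤ) - delta ((r:ℤ)+1)) 0 = 0 := by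
  rcases r with _ | r <;> simp [delta]

lemma bsum_apply (c : ℕ →₀ ℕ) (m : ℕ) :
    (c.sum fun r k =>
      k • (if r = 0 then -(delta 1) else delta (r:ℤ) - delta ((r:ℤ)+1))) (m+1)
      = (c (m+1) : ℤ) - c m := by
  rw [Finsupp.sum, Finset.sum_apply]
  have : ∀ r ∈ c.support, ((c r) • (if r = 0 then -(delta 1) else delta (r:ℤ) - delta ((r:ℤ)+1))) (m+1)
      = (c r : ℤ) * (if r = m+1 then 1 else 0) - (c r : ℤ) * (if r = m then 1 else 0) := by
    intro r _
    rw [Pi.smul_apply, bgen_apply, nsmul_eq_mul]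
    ring
  rw [Finset.sum_congr rfl this, Finset.sum_sub_distrib, finsupp_sum_ind, finsupp_sum_ind]

lemma bsum_apply_zero (c : ℕ →₀ ℕ) :
    (c.sum fun r k =>
      k • (if r = 0 then -(delta 1) else delta (r:ℤ) - delta ((r:ℤ)+1))) 0 = 0 := by
  rw [Finsupp.sum, Finset.sum_apply]
  apply Finset.sum_eq_zero
  intro r _
  rw [Pi.smul_apply, bgen_apply_zero, smul_zero]

lemma bcone_iff (v : ℕ → ℤ) :
    BCone v ↔ v 0 = 0 ∧ ∃ c : ℕ →₀ ℕ, ∀ m : ℕ, v (m+1) = (c (m+1) : ℤ) - c m := by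
  constructor
  · rintro ⟨c, rfl⟩
    exact ⟨bsum_apply_zero c, c, fun m => (bsum_apply c m)⟩
  · rintro ⟨h0, c, hc⟩
    refine ⟨c, funext fun m => ?_⟩
    cases m with
    | zero => rw [h0, bsum_apply_zero]
    | succ m => rw [hc m, bsum_apply]

lemma ggen_apply (r m : ℤ) :
    (gam r - gam (r+1)) m = (if r = m then (1:ℤ) else 0) - (if r = m-1 then 1 else 0) := by
  rw [Pi.sub_apply]
  simp only [gam]
  split_ifs <;> first | contradiction | omega

lemma gsum_apply (c : ℤ →₀ ℕ) (m : ℤ) :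
    (c.sum fun r k => k • (gam r - gam (r+1))) m = (c m : ℤ) - c (m-1) := by
  rw [Finsupp.sum, Finset.sum_apply]
  have : ∀ r ∈ c.support, ((c r) • (gam r - gam (r+1))) m
      = (c r : ℤ) * (if r = m then 1 else 0) - (c r : ℤ) * (if r = m-1 then 1 else 0) := by
    intro r _
    rw [Pi.smul_apply, ggen_apply, nsmul_eq_mul]
    ring
  rw [Finset.sum_congr rfl this, Finset.sum_sub_distrib, finsupp_sum_ind, finsupp_sum_ind]

lemma gcone_iff (w : ℤ → ℤ) :
    GCone w ↔ ∃ c : ℤ →₀ ℕ, ∀ m : ℤ, w m = (c m : ℤ) - c (m-1) := by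
  constructor
  · rintro ⟨c, rfl⟩
    exact ⟨c, fun m => gsum_apply c m⟩
  · rintro ⟨c, hc⟩
    exact ⟨c, funext fun m => by rw [hc m, gsum_apply]⟩

lemma delta_eq_zero_of_lt (a : ℤ) (m : ℕ) (h : a.natAbs < m) : delta a m = 0 := by
  simp only [delta]
  split_ifs <;> omega

lemma sum_delta_Icc (a : ℤ) (ha : a ≠ 0) (B : ℕ) (hB : a.natAbs ≤ B) :
    ∑ k ∈ Finset.Icc 1 B, delta a k = if 0 < a then 1 else -1 := by
  by_cases h : 0 < a
  · rw [if_pos h]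
    have he : ∀ k ∈ Finset.Icc 1 B, delta a k = if k = a.toNat then (1:ℤ) else 0 := by
      intro k hk
      rw [Finset.mem_Icc] at hk
      simp only [delta]
      split_ifs <;> omega
    rw [Finset.sum_congr rfl he, Finset.sum_ite_eq' (Finset.Icc 1 B) a.toNat (fun _ => (1:ℤ)),
      if_pos (Finset.mem_Icc.2 (by omega))]
  · rw [if_neg h]
    have he : ∀ k ∈ Finset.Icc 1 B, delta a k = if k = (-a).toNat then (-1:ℤ) else 0 := by
      intro k hk
      rw [Finset.mem_Icc] at hk
      simp only [delta]
      split_ifs <;> omega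
    rw [Finset.sum_congr rfl he, Finset.sum_ite_eq' (Finset.Icc 1 B) (-a).toNat (fun _ => (-1:ℤ)),
      if_pos (Finset.mem_Icc.2 (by omega))]

noncomputable section Transfer

/-- The embedding `m ↦ −m − 1` of `ℕ` into `ℤ`. -/
def emb : ℕ ↪ ℤ := ⟨fun m => -(m:ℤ) - 1, fun a b h => by simp only at h; omega⟩

lemma gcone_psi (v : ℕ → ℤ) (h0 : v 0 = 0) (B : ℕ)
    (hvan : ∀ m : ℕ, B < m → v m = 0)
    (hsum : ∑ k ∈ Finset.Icc 1 B, v k = 0) :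
    BCone v → GCone (psi v) := by
  intro hb
  obtain ⟨-, c, hc⟩ := (bcone_iff v).1 hb
  have key : ∀ m : ℕ, (c m : ℤ) = c 0 + ∑ k ∈ Finset.Icc 1 m, v k := by
    intro m
    induction m with
    | zero => simp
    | succ m ih =>
      rw [Finset.sum_Icc_succ_top (Nat.succ_le_succ (Nat.zero_le m)), ← add_assoc, ← ih, hc m]
      ring
  have hstab : ∀ d : ℕ, (c (B + d) : ℤ) = c B := by
    intro d
    induction d with
    | zero => rfl
    | succ d ih =>
      have := hc (B + d)
      rw [hvan (B + d + 1) (by omega)] at this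
      rw [show B + (d+1) = B + d + 1 from rfl]
      omega
  have hc0 : c 0 = 0 := by
    have h1 := key B
    rw [hsum] at h1
    have h2 := hstab (c.support.sup id + 1)
    have hM : c (B + (c.support.sup id + 1)) = 0 := by
      by_contra h
      have h3 := Finset.le_sup (f := id) (Finsupp.mem_support_iff.2 h)
      simp only [id] at h3
      omega
    rw [hM] at h2
    omega
  set c' : ℤ →₀ ℕ := c.embDomain emb with hc'
  have hrange : ∀ m : ℤ, 0 ≤ m → c' m = 0 := by
    intro m hm
    apply Finsupp.embDomain_notin_range
    rintro ⟨a, ha⟩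
    simp only [emb, Function.Embedding.coeFn_mk] at ha
    change -(a:ℤ) - 1 = m at ha
    omega
  have happ : ∀ k : ℕ, c' (-(k:ℤ) - 1) = c k := by
    intro k
    rw [show -(k:ℤ) - 1 = emb k from rfl]
    exact Finsupp.embDomain_apply_self emb c k
  refine (gcone_iff _).2 ⟨c', fun m => ?_⟩
  rcases lt_or_ge m 0 with hm | hm
  · set k : ℕ := (-m - 1).toNat with hk
    have e1 : m = -(k:ℤ) - 1 := by omega
    have e3 : psi v m = -v (k+1) := by
      simp only [psi, if_pos hm]
      rw [show (-m).toNat = k + 1 from by omega]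
    rw [e3, e1, happ]
    rw [show (-(k:ℤ) - 1) - 1 = -((k+1 : ℕ):ℤ) - 1 from by push_cast; ring, happ]
    have := hc k
    omega
  · have e1 : psi v m = 0 := if_neg (by omega)
    have e2 : c' m = 0 := hrange m hm
    have e3 : c' (m - 1) = 0 := by
      rcases eq_or_lt_of_le hm with h | h
      · rw [show m - 1 = -((0:ℕ):ℤ) - 1 from by omega, happ, hc0]
      · exact hrange _ (by omega)
    rw [e1, e2, e3]
    simp

lemma bcone_of_gcone_psi (v : ℕ → ℤ) (h0 : v 0 = 0) : GCone (psi v) → BCone v := by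
  intro hg
  obtain ⟨c', hc'⟩ := (gcone_iff _).1 hg
  refine (bcone_iff v).2 ⟨h0, ?_⟩
  refine ⟨Finsupp.comapDomain (fun m : ℕ => -(m:ℤ) - 1) c'
    (by intro a _ b _ h; simp only at h; omega), fun m => ?_⟩
  change v (m+1) = (c' (-((m+1 : ℕ):ℤ) - 1) : ℤ) - (c' (-(m:ℤ) - 1) : ℤ)
  have h1 := hc' (-(m:ℤ) - 1)
  have h2 : psi v (-(m:ℤ) - 1) = -v (m+1) := by
    simp only [psi, if_pos (show -(m:ℤ) - 1 < 0 by omega)]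
    rw [show (-(-(m:ℤ) - 1)).toNat = m + 1 from by omega]
  rw [h2] at h1
  push_cast
  rw [show -((m:ℤ)+1) - 1 = -(m:ℤ) - 1 - 1 from by ring]
  linarith

end Transfer

end Aux

/-- For `λ, μ ∈ Λ≥_{ℤ×}(p)`, `λ ⪰ μ` iff `λ♭ ⪰_a μ♭`. -/
theorem bsucceq_iff_flat_asucceq {n : ℕ} (p : ℕ) (lam mu : Fin n → ℤ)
    (hlam : ∀ i j : Fin n, i ≤ j → lam j ≤ lam i)
    (hmu : ∀ i j : Fin n, i ≤ j → mu j ≤ mu i)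
    (hl0 : ∀ i, lam i ≠ 0) (hm0 : ∀ i, mu i ≠ 0)
    (hlp : ∀ i : Fin n, (i : ℕ) < p ↔ 0 < lam i)
    (hmp : ∀ i : Fin n, (i : ℕ) < p ↔ 0 < mu i) :
    BSucceq lam mu ↔ ASucceq p (flat p lam) (flat p mu) := by
  classical
  -- termwise comparison of the `gl`-side summands with `ψ` of the `b`-side summands
  have hterm : ∀ (f : Fin n → ℤ), (∀ i, f i ≠ 0) → (∀ i : Fin n, (i:ℕ) < p ↔ 0 < f i) →
      ∀ i : Fin n, (if (i : ℕ) < p then -(gam (flat p f i)) else gam (flat p f i))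
        = psi (delta (f i)) := by
    intro f hf0 hfp i
    by_cases h : (i : ℕ) < p
    · rw [if_pos h, show flat p f i = -f i from by simp [flat, h]]
      exact psi_delta_pos _ ((hfp i).1 h)
    · rw [if_neg h, show flat p f i = f i from by simp [flat, h]]
      exact psi_delta_neg _ (lt_of_le_of_ne (not_lt.1 (fun hp => h ((hfp i).2 hp))) (hf0 i))
  have hsumA : wtsA p (flat p lam) = fun s => psi (wts lam s) := by
    funext s
    rw [wtsA, wts, psi_sum]
    exact Finset.sum_congr rfl (fun i _ => hterm lam hl0 hlp i)
  have hsumB : wtsA p (flat p mu) = fun s => psi (wts mu s) := by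
    funext s
    rw [wtsA, wts, psi_sum]
    exact Finset.sum_congr rfl (fun i _ => hterm mu hm0 hmp i)
  have htotA : (∑ i : Fin n, (if (i : ℕ) < p then -(gam (flat p lam i)) else gam (flat p lam i)))
      = psi (∑ i : Fin n, delta (lam i)) := by
    rw [psi_sum]
    exact Finset.sum_congr rfl (fun i _ => hterm lam hl0 hlp i)
  have htotB : (∑ i : Fin n, (if (i : ℕ) < p then -(gam (flat p mu i)) else gam (flat p mu i)))
      = psi (∑ i : Fin n, delta (mu i)) := by
    rw [psi_sum]
    exact Finset.sum_congr rfl (fun i _ => hterm mu hm0 hmp i)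
  -- a bound on all the entries
  set B : ℕ := Finset.univ.sup (fun i : Fin n => max (lam i).natAbs (mu i).natAbs) with hBdef
  have hB : ∀ i, max (lam i).natAbs (mu i).natAbs ≤ B := by
    intro i
    rw [hBdef]
    exact Finset.le_sup (f := fun i : Fin n => max (lam i).natAbs (mu i).natAbs)
      (Finset.mem_univ i)
  have hlB : ∀ i, (lam i).natAbs ≤ B := fun i => le_trans (le_max_left _ _) (hB i)
  have hmB : ∀ i, (mu i).natAbs ≤ B := fun i => le_trans (le_max_right _ _) (hB i)
  -- basic facts about the differences
  have h0 : ∀ s, (wts lam s - wts mu s) 0 = 0 := by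
    intro s
    rw [Pi.sub_apply, wts, wts, Finset.sum_apply, Finset.sum_apply]
    simp [delta]
  have hvan : ∀ s, ∀ m : ℕ, B < m → (wts lam s - wts mu s) m = 0 := by
    intro s m hm
    rw [Pi.sub_apply, wts, wts, Finset.sum_apply, Finset.sum_apply,
      Finset.sum_eq_zero (fun i _ => delta_eq_zero_of_lt _ _ (lt_of_le_of_lt (hlB i) hm)),
      Finset.sum_eq_zero (fun i _ => delta_eq_zero_of_lt _ _ (lt_of_le_of_lt (hmB i) hm))]
    simp
  have hsum0 : ∀ s, ∑ k ∈ Finset.Icc 1 B, (wts lam s - wts mu s) k = 0 := by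
    intro s
    simp only [Pi.sub_apply, wts, Finset.sum_apply]
    rw [Finset.sum_sub_distrib, sub_eq_zero]
    conv_lhs => rw [Finset.sum_comm]
    conv_rhs => rw [Finset.sum_comm]
    apply Finset.sum_congr rfl
    intro i _
    rw [sum_delta_Icc _ (hl0 i) B (hlB i), sum_delta_Icc _ (hm0 i) B (hmB i)]
    by_cases h : 0 < lam i
    · rw [if_pos h, if_pos ((hmp i).1 ((hlp i).2 h))]
    · rw [if_neg h, if_neg (fun hm' => h ((hlp i).1 ((hmp i).2 hm')))]
  rw [BSucceq, ASucceq]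
  constructor
  · rintro ⟨heq, hcone⟩
    constructor
    · rw [htotA, htotB, heq]
    · intro s
      rw [hsumA, hsumB]
      rw [← psi_sub]
      exact gcone_psi _ (h0 s) B (hvan s) (hsum0 s) (hcone s)
  · rintro ⟨heq, hcone⟩
    constructor
    · rw [htotA, htotB] at heq
      apply psi_injOn _ _ heq
      rw [Finset.sum_apply, Finset.sum_apply]
      simp [delta]
    · intro s
      have hc := hcone s
      rw [hsumA, hsumB, ← psi_sub] at hc
      exact bcone_of_gcone_psi _ (h0 s) hc
end

section
/- For half-integer dominant λ, μ and θ ∈ ℤ₊^r, λ = R_θ(μ) if and only if λ♯ = R_θ(μ♯), where R_θ is the composite raising operator applied to the atypical pairs of μ. -/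
/-- The basis vector `εᵢ`. -/
def epsQ {n : ℕ} (i : Fin n) : Fin n → ℚ := fun k => if k = i then 1 else 0

/-- Dominance for `q(n)`-weights. -/
def Dom {n : ℕ} (lam : Fin n → ℚ) : Prop :=
  ∀ i j : Fin n, i < j → lam j ≤ lam i ∧ (lam i = lam j → lam i = 0)

/-- `ν` is conjugate under the symmetric group (the Weyl group `W`) to a dominant
weight. -/
def ConjDom {n : ℕ} (v : Fin n → ℚ) : Prop :=
  ∃ w : Equiv.Perm (Fin n), Dom (v ∘ w)

/-- The raising operator `R_{i,j}(λ) = λ + a(εᵢ − εⱼ)`, where `a` is the smallest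
positive integer such that `λ + a(εᵢ − εⱼ)` and all `R_{k,l}(λ) + a(εᵢ − εⱼ)`,
for atypical pairs `k < i < j < l`, are `W`-conjugate to dominant weights. -/
noncomputable def Rop {n : ℕ} (lam : Fin n → ℚ) (i j : Fin n) : Fin n → ℚ :=
  lam + ((sInf {a : ℕ | 0 < a ∧ ConjDom (lam + (a : ℚ) • (epsQ i - epsQ j)) ∧
      ∀ k l : Fin n, k < i → j < l → lam k + lam l = 0 →
        ConjDom (Rop lam k l + (a : ℚ) • (epsQ i - epsQ j))} : ℕ) : ℚ) •
    (epsQ i - epsQ j)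
termination_by (i : ℕ)
decreasing_by exact ‹_ < i›

/-- `θ`-fold iterate of `R_{i,j}`. -/
noncomputable def Rpow {n : ℕ} (i j : Fin n) (t : ℕ) (v : Fin n → ℚ) : Fin n → ℚ :=
  (fun m => Rop m i j)^[t] v

/-- The composite `R_{i₁,j₁}^{θ₁} ∘ ⋯ ∘ R_{i_r,j_r}^{θ_r}` (before taking the
dominant representative). -/
noncomputable def Rcomp {n r : ℕ} (i j : Fin r → Fin n) (θ : Fin r → ℕ) (mu : Fin n → ℚ) :
    Fin n → ℚ :=
  ((List.ofFn fun s : Fin r => Rpow (i s) (j s) (θ s)).foldr (· ∘ ·) id) mu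

/-- The map `♯` sending `λᵢ` to `λᵢ + sgn(λᵢ)·½`. -/
def sharpQ {n : ℕ} (lam : Fin n → ℚ) : Fin n → ℚ :=
  fun i => lam i + (if 0 < lam i then (1 : ℚ) / 2 else -(1 / 2))

section Aux

variable {n : ℕ}

/-- scalar version of `♯`. -/
def sh (x : ℚ) : ℚ := x + (if 0 < x then (1:ℚ)/2 else -(1/2))

lemma sharpQ_eq (v : Fin n → ℚ) : sharpQ v = fun m => sh (v m) := rfl

lemma sh_strictMono : StrictMono sh := by
  intro x y h
  unfold sh
  by_cases hx : 0 < x <;> by_cases hy : 0 < y <;> simp [hx, hy] <;> linarith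

lemma sh_half_int (p : ℤ) : sh ((p:ℚ) + 1/2) = ((if 0 ≤ p then p+1 else p : ℤ) : ℚ) := by
  unfold sh
  rcases le_or_gt 0 p with h | h
  · have h1 : (0:ℚ) ≤ p := by exact_mod_cast h
    rw [if_pos (by linarith), if_pos h]
    push_cast; ring
  · have h1 : (p:ℚ) ≤ -1 := by exact_mod_cast (by omega : p ≤ -1)
    rw [if_neg (by linarith), if_neg (by omega)]
    ring

lemma sh_ne_zero {x : ℚ} (h : ∃ k : ℤ, x = (k:ℚ) + 1/2) : sh x ≠ 0 := by
  obtain ⟨k, rfl⟩ := h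
  rw [sh_half_int, Int.cast_ne_zero]
  split_ifs with h <;> omega

lemma half_ne_zero {x : ℚ} (h : ∃ k : ℤ, x = (k:ℚ) + 1/2) : x ≠ 0 := by
  obtain ⟨k, rfl⟩ := h
  intro h0
  have : ((2*k+1 : ℤ) : ℚ) = 0 := by push_cast; linarith
  have := Int.cast_eq_zero.mp this
  omega

lemma sh_add_zero_iff {x y : ℚ} (hx : ∃ p : ℤ, x = (p:ℚ) + 1/2) (hy : ∃ q : ℤ, y = (q:ℚ) + 1/2) :
    sh x + sh y = 0 ↔ x + y = 0 := by
  obtain ⟨p, rfl⟩ := hx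
  obtain ⟨q, rfl⟩ := hy
  rw [sh_half_int, sh_half_int, ← Int.cast_add, Int.cast_eq_zero]
  rw [show (p:ℚ) + 1/2 + ((q:ℚ) + 1/2) = ((p+q+1 : ℤ) : ℚ) by push_cast; ring, Int.cast_eq_zero]
  split_ifs <;> omega

/-- half-integer vectors -/
def HalfInt (v : Fin n → ℚ) : Prop := ∀ m, ∃ k : ℤ, v m = (k:ℚ) + 1/2

lemma sharpQ_inj {u v : Fin n → ℚ} (h : sharpQ u = sharpQ v) : u = v := by
  funext m
  exact sh_strictMono.injective (congrFun h m)

lemma dom_iff_strict {u : Fin n → ℚ} (h0 : ∀ m, u m ≠ 0) :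
    Dom u ↔ ∀ a b : Fin n, a < b → u b < u a := by
  constructor
  · intro hd a b hab
    obtain ⟨hle, heq⟩ := hd a b hab
    exact lt_of_le_of_ne hle (fun h => h0 a (heq h.symm))
  · intro h a b hab
    exact ⟨(h a b hab).le, fun he => absurd he (h a b hab).ne'⟩

lemma dom_sharp_iff {v : Fin n → ℚ} (hv : HalfInt v) : Dom (sharpQ v) ↔ Dom v := by
  rw [dom_iff_strict (u := sharpQ v) (fun m => sh_ne_zero (hv m)),
    dom_iff_strict (u := v) (fun m => half_ne_zero (hv m))]
  exact forall_congr' fun a => forall_congr' fun b => imp_congr Iff.rfl sh_strictMono.lt_iff_lt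

lemma conjDom_sharp_iff {v : Fin n → ℚ} (hv : HalfInt v) : ConjDom (sharpQ v) ↔ ConjDom v := by
  refine exists_congr fun w => ?_
  rw [show sharpQ v ∘ w = sharpQ (v ∘ w) from rfl]
  exact dom_sharp_iff (fun m => hv (w m))

lemma addeps_of_ne {v : Fin n → ℚ} {a : ℚ} {i j m : Fin n} (h1 : m ≠ i) (h2 : m ≠ j) :
    (v + a • (epsQ i - epsQ j)) m = v m := by
  simp [epsQ, h1, h2]

lemma addeps_i {v : Fin n → ℚ} {a : ℚ} {i j : Fin n} (h : i ≠ j) :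
    (v + a • (epsQ i - epsQ j)) i = v i + a := by
  simp [epsQ, h]

lemma addeps_j {v : Fin n → ℚ} {a : ℚ} {i j : Fin n} (h : i ≠ j) :
    (v + a • (epsQ i - epsQ j)) j = v j - a := by
  simp [epsQ, h.symm, Ne.symm h]
  ring

lemma halfInt_addeps {v : Fin n → ℚ} (hv : HalfInt v) (a : ℕ) (i j : Fin n) :
    HalfInt (v + (a:ℚ) • (epsQ i - epsQ j)) := by
  intro m
  obtain ⟨k, hk⟩ := hv m
  simp only [Pi.add_apply, Pi.smul_apply, Pi.sub_apply, epsQ, smul_eq_mul]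
  split_ifs with h1 h2 h2
  · exact ⟨k, by rw [hk]; ring⟩
  · exact ⟨k + a, by rw [hk]; push_cast; ring⟩
  · exact ⟨k - a, by rw [hk]; push_cast; ring⟩
  · exact ⟨k, by rw [hk]; ring⟩

lemma sharp_addeps {v : Fin n → ℚ} {i j : Fin n} (hi : 0 < v i) (hj : v j < 0)
    (hne : i ≠ j) (a : ℕ) :
    sharpQ (v + (a:ℚ) • (epsQ i - epsQ j)) = sharpQ v + (a:ℚ) • (epsQ i - epsQ j) := by
  have ha : (0:ℚ) ≤ a := Nat.cast_nonneg a
  funext m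
  show sh ((v + (a:ℚ) • (epsQ i - epsQ j)) m) = sh (v m) + ((a:ℚ) • (epsQ i - epsQ j)) m
  by_cases h1 : m = i
  · subst h1
    have hX : ((a:ℚ) • (epsQ m - epsQ j)) m = a := by
      simp only [Pi.smul_apply, Pi.sub_apply, smul_eq_mul, epsQ]
      simp [hne]
    rw [addeps_i hne, hX]
    unfold sh
    rw [if_pos hi, if_pos (by linarith)]
    ring
  · by_cases h2 : m = j
    · subst h2
      have hX : ((a:ℚ) • (epsQ i - epsQ m)) m = -a := by
        simp only [Pi.smul_apply, Pi.sub_apply, smul_eq_mul, epsQ]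
        simp [Ne.symm hne]
      rw [addeps_j hne, hX]
      unfold sh
      rw [if_neg (by linarith), if_neg (by linarith)]
      ring
    · have hX : ((a:ℚ) • (epsQ i - epsQ j)) m = 0 := by
        simp only [Pi.smul_apply, Pi.sub_apply, smul_eq_mul, epsQ]
        simp [h1, h2]
      rw [addeps_of_ne h1 h2, hX, add_zero]

lemma Rop_spec (v : Fin n → ℚ) (i j : Fin n) :
    ∃ c : ℕ, Rop v i j = v + (c:ℚ) • (epsQ i - epsQ j) := by
  rw [Rop]; exact ⟨_, rfl⟩

lemma halfInt_Rop {v : Fin n → ℚ} (hv : HalfInt v) (i j : Fin n) : HalfInt (Rop v i j) := by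
  obtain ⟨c, hc⟩ := Rop_spec v i j
  rw [hc]; exact halfInt_addeps hv c i j

lemma Rop_apply_ne {v : Fin n → ℚ} {i j m : Fin n} (h1 : m ≠ i) (h2 : m ≠ j) :
    Rop v i j m = v m := by
  obtain ⟨c, hc⟩ := Rop_spec v i j
  rw [hc]; exact addeps_of_ne h1 h2

end Aux

section Main

variable {n : ℕ}

lemma Rop_sharp : ∀ (N : ℕ) (v : Fin n → ℚ) (i j : Fin n), (i:ℕ) < N → HalfInt v →
    0 < v i → v j < 0 →
    (∀ k l : Fin n, k < i → j < l → v k + v l = 0 → 0 < v k) →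
    Rop (sharpQ v) i j = sharpQ (Rop v i j) := by
  intro N
  induction N with
  | zero => intro v i j h; exact absurd h (Nat.not_lt_zero _)
  | succ N IH =>
    intro v i j hiN hv hi hj hpair
    have hne : i ≠ j := fun h => by rw [h] at hi; linarith
    have hset : {a : ℕ | 0 < a ∧ ConjDom (sharpQ v + (a : ℚ) • (epsQ i - epsQ j)) ∧
        ∀ k l : Fin n, k < i → j < l → sharpQ v k + sharpQ v l = 0 →
          ConjDom (Rop (sharpQ v) k l + (a : ℚ) • (epsQ i - epsQ j))} =
        {a : ℕ | 0 < a ∧ ConjDom (v + (a : ℚ) • (epsQ i - epsQ j)) ∧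
        ∀ k l : Fin n, k < i → j < l → v k + v l = 0 →
          ConjDom (Rop v k l + (a : ℚ) • (epsQ i - epsQ j))} := by
      ext a
      simp only [Set.mem_setOf_eq]
      have hC : ConjDom (sharpQ v + (a : ℚ) • (epsQ i - epsQ j)) ↔
          ConjDom (v + (a : ℚ) • (epsQ i - epsQ j)) := by
        rw [← sharp_addeps hi hj hne a]
        exact conjDom_sharp_iff (halfInt_addeps hv a i j)
      have hCkl : ∀ k l : Fin n, k < i → j < l → v k + v l = 0 →
          (ConjDom (Rop (sharpQ v) k l + (a : ℚ) • (epsQ i - epsQ j)) ↔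
           ConjDom (Rop v k l + (a : ℚ) • (epsQ i - epsQ j))) := by
        intro k l hki hjl hkl
        have h0k : 0 < v k := hpair k l hki hjl hkl
        have h0l : v l < 0 := by linarith
        have hkN : (k:ℕ) < N := by
          have h1 : (k:ℕ) < (i:ℕ) := hki
          omega
        have hrec : Rop (sharpQ v) k l = sharpQ (Rop v k l) :=
          IH v k l hkN hv h0k h0l
            (fun k' l' hk' hl' h' => hpair k' l' (hk'.trans hki) (hjl.trans hl') h')
        rw [hrec]
        have hik : i ≠ k := hki.ne'
        have hil : i ≠ l := fun h => by rw [← h] at h0l; linarith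
        have hjk : j ≠ k := fun h => by rw [← h] at h0k; linarith
        have hjl' : j ≠ l := hjl.ne
        have hri : 0 < (Rop v k l) i := by rw [Rop_apply_ne hik hil]; exact hi
        have hrj : (Rop v k l) j < 0 := by rw [Rop_apply_ne hjk hjl']; exact hj
        rw [← sharp_addeps hri hrj hne a]
        exact conjDom_sharp_iff (halfInt_addeps (halfInt_Rop hv k l) a i j)
      constructor
      · rintro ⟨ha, hc, hk⟩
        exact ⟨ha, hC.1 hc, fun k l hki hjl hkl => (hCkl k l hki hjl hkl).1
          (hk k l hki hjl ((sh_add_zero_iff (hv k) (hv l)).2 hkl))⟩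
      · rintro ⟨ha, hc, hk⟩
        refine ⟨ha, hC.2 hc, fun k l hki hjl hkl => ?_⟩
        have hkl' : v k + v l = 0 := (sh_add_zero_iff (hv k) (hv l)).1 hkl
        exact (hCkl k l hki hjl hkl').2 (hk k l hki hjl hkl')
    rw [Rop]
    conv_rhs => rw [Rop]
    rw [hset, sharp_addeps hi hj hne]

/-- invariant carried through the iteration -/
def RInv (v : Fin n → ℚ) (i j : Fin n) : Prop :=
  i < j ∧ HalfInt v ∧ 0 < v i ∧ v j < 0 ∧
    ∀ k l : Fin n, k < i → j < l → v k + v l = 0 → 0 < v k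

lemma inv_Rop {v : Fin n → ℚ} {i j : Fin n} (h : RInv v i j) : RInv (Rop v i j) i j := by
  obtain ⟨hij, hv, hi, hj, hpair⟩ := h
  obtain ⟨c, hc⟩ := Rop_spec v i j
  have hne : i ≠ j := hij.ne
  have hca : (0:ℚ) ≤ c := Nat.cast_nonneg c
  refine ⟨hij, halfInt_Rop hv i j, ?_, ?_, ?_⟩
  · rw [hc, addeps_i hne]; linarith
  · rw [hc, addeps_j hne]; linarith
  · intro k l hki hjl hkl
    have hk1 : k ≠ i := hki.ne
    have hk2 : k ≠ j := (hki.trans hij).ne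
    have hl1 : l ≠ i := (hij.trans hjl).ne'
    have hl2 : l ≠ j := hjl.ne'
    rw [hc, addeps_of_ne hk1 hk2, addeps_of_ne hl1 hl2] at hkl
    rw [hc, addeps_of_ne hk1 hk2]
    exact hpair k l hki hjl hkl

lemma Rpow_succ (i j : Fin n) (t : ℕ) (v : Fin n → ℚ) :
    Rpow i j (t+1) v = Rop (Rpow i j t v) i j :=
  Function.iterate_succ_apply' _ _ _

lemma Rpow_sharp {v : Fin n → ℚ} {i j : Fin n} (t : ℕ) (h : RInv v i j) :
    Rpow i j t (sharpQ v) = sharpQ (Rpow i j t v) ∧ RInv (Rpow i j t v) i j := by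
  induction t with
  | zero => exact ⟨rfl, h⟩
  | succ t IH =>
    obtain ⟨hc, hinv⟩ := IH
    obtain ⟨hij, hv, hi, hj, hpair⟩ := hinv
    constructor
    · rw [Rpow_succ, Rpow_succ, hc]
      exact Rop_sharp ((i:ℕ)+1) _ i j (Nat.lt_succ_self _) hv hi hj hpair
    · rw [Rpow_succ]
      exact inv_Rop ⟨hij, hv, hi, hj, hpair⟩

lemma Rpow_apply_ne {v : Fin n → ℚ} {i j m : Fin n} (h1 : m ≠ i) (h2 : m ≠ j) (t : ℕ) :
    Rpow i j t v m = v m := by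
  induction t with
  | zero => rfl
  | succ t IH => rw [Rpow_succ, Rop_apply_ne h1 h2, IH]

lemma halfInt_Rpow {v : Fin n → ℚ} (hv : HalfInt v) (i j : Fin n) (t : ℕ) :
    HalfInt (Rpow i j t v) := by
  induction t with
  | zero => exact hv
  | succ t IH => rw [Rpow_succ]; exact halfInt_Rop IH i j

lemma Rcomp_succ {r : ℕ} (i j : Fin (r+1) → Fin n) (θ : Fin (r+1) → ℕ) (mu : Fin n → ℚ) :
    Rcomp i j θ mu =
      Rpow (i 0) (j 0) (θ 0) (Rcomp (i ∘ Fin.succ) (j ∘ Fin.succ) (θ ∘ Fin.succ) mu) := by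
  unfold Rcomp; rw [List.ofFn_succ]; rfl

lemma Rcomp_sharp : ∀ (r : ℕ) (i j : Fin r → Fin n) (θ : Fin r → ℕ) (mu : Fin n → ℚ),
    HalfInt mu → StrictMono i → StrictAnti j → (∀ s, i s < j s) →
    (∀ s, 0 < mu (i s)) → (∀ s, mu (i s) + mu (j s) = 0) →
    (∀ k l : Fin n, k < l → mu k + mu l = 0 → 0 < mu k) →
    Rcomp i j θ (sharpQ mu) = sharpQ (Rcomp i j θ mu) ∧
    (∀ m : Fin n, (∀ s, m ≠ i s ∧ m ≠ j s) → Rcomp i j θ mu m = mu m) ∧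
    HalfInt (Rcomp i j θ mu) := by
  intro r
  induction r with
  | zero => intro i j θ mu hmu _ _ _ _ _ _; exact ⟨rfl, fun m _ => rfl, hmu⟩
  | succ r IH =>
    intro i j θ mu hmu hmono hanti hnest hpos hat hall
    obtain ⟨hc, hfix, hhalf⟩ := IH (i ∘ Fin.succ) (j ∘ Fin.succ) (θ ∘ Fin.succ) mu hmu
      (fun a b h => hmono (Fin.succ_lt_succ_iff.mpr h))
      (fun a b h => hanti (Fin.succ_lt_succ_iff.mpr h))
      (fun s => hnest _) (fun s => hpos _) (fun s => hat _) hall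
    set v := Rcomp (i ∘ Fin.succ) (j ∘ Fin.succ) (θ ∘ Fin.succ) mu with hvdef
    have hout : ∀ m : Fin n, (m ≤ i 0 ∨ j 0 ≤ m) → v m = mu m := by
      intro m hm
      refine hfix m fun s => ?_
      have h1 : i 0 < i s.succ := hmono (Fin.succ_pos s)
      have h2 : j s.succ < j 0 := hanti (Fin.succ_pos s)
      have h3 : i s.succ < j s.succ := hnest _
      rcases hm with hm | hm
      · exact ⟨(lt_of_le_of_lt hm h1).ne, (lt_of_le_of_lt hm (h1.trans h3)).ne⟩
      · exact ⟨(lt_of_lt_of_le (h3.trans h2) hm).ne', (lt_of_lt_of_le h2 hm).ne'⟩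
    have hinv : RInv v (i 0) (j 0) := by
      refine ⟨hnest 0, hhalf, ?_, ?_, ?_⟩
      · rw [hout (i 0) (Or.inl le_rfl)]; exact hpos 0
      · rw [hout (j 0) (Or.inr le_rfl)]
        have := hat 0; have := hpos 0; linarith
      · intro k l hk hl hkl
        rw [hout k (Or.inl hk.le), hout l (Or.inr hl.le)] at hkl
        rw [hout k (Or.inl hk.le)]
        exact hall k l (hk.trans ((hnest 0).trans hl)) hkl
    refine ⟨?_, ?_, ?_⟩
    · rw [Rcomp_succ, Rcomp_succ, hc, ← hvdef]
      exact (Rpow_sharp (θ 0) hinv).1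
    · intro m hm
      rw [Rcomp_succ, ← hvdef, Rpow_apply_ne (hm 0).1 (hm 0).2]
      exact hfix m fun s => hm s.succ
    · rw [Rcomp_succ, ← hvdef]
      exact halfInt_Rpow hhalf _ _ _

end Main

/-- For half-integer dominant `λ, μ` with atypical pairs `(iₛ, jₛ)` of `μ` and
`θ ∈ ℤ₊^r`, one has `λ = R_θ(μ)` iff `λ♯ = R_θ(μ♯)`; since `λ` (resp. `λ♯`) is
dominant, `λ = R_θ(μ)` is expressed as: `λ` is `W`-conjugate to the composite
raising operator applied to `μ`. -/
theorem Rtheta_iff_sharp {n r : ℕ} (lam mu : Fin n → ℚ)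
    (hdl : Dom lam) (hdm : Dom mu)
    (hl : ∀ i, ∃ k : ℤ, lam i = (k : ℚ) + 1 / 2)
    (hm : ∀ i, ∃ k : ℤ, mu i = (k : ℚ) + 1 / 2)
    (i j : Fin r → Fin n)
    (hmono : StrictMono i) (hanti : StrictAnti j) (hnest : ∀ s, i s < j s)
    (hat : ∀ s, mu (i s) + mu (j s) = 0)
    (hall : ∀ a b : Fin n, a < b → mu a + mu b = 0 → ∃ s, a = i s ∧ b = j s)
    (θ : Fin r → ℕ) :
    (∃ w : Equiv.Perm (Fin n), lam = Rcomp i j θ mu ∘ w) ↔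
      (∃ w : Equiv.Perm (Fin n), sharpQ lam = Rcomp i j θ (sharpQ mu) ∘ w) := by
  have hm' : HalfInt mu := hm
  have hpos : ∀ s, 0 < mu (i s) := by
    intro s
    have h1 := (hdm (i s) (j s) (hnest s)).1
    have h2 := hat s
    have h3 : mu (i s) ≠ 0 := half_ne_zero (hm (i s))
    rcases lt_or_eq_of_le (by linarith : (0:ℚ) ≤ mu (i s)) with h | h
    · exact h
    · exact absurd h.symm h3
  have hall' : ∀ k l : Fin n, k < l → mu k + mu l = 0 → 0 < mu k := by
    intro k l hkl h0
    obtain ⟨s, rfl, rfl⟩ := hall k l hkl h0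
    exact hpos s
  obtain ⟨hc, -, -⟩ := Rcomp_sharp r i j θ mu hm' hmono hanti hnest hpos hat hall'
  constructor
  · rintro ⟨w, rfl⟩
    exact ⟨w, by rw [hc]; rfl⟩
  · rintro ⟨w, hw⟩
    refine ⟨w, sharpQ_inj ?_⟩
    rw [hw, hc]; rfl
end
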